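/- Let γ be an ordinal closed under ordinal addition which is not a cardinal. If α < |γ|⁺ is a successor ordinal, where |γ|⁺ is the successor cardinal of the cardinality of γ, then θ_γ is order isomorphic to θ_γ × α. -/

import Mathlib

/-- The carrier of the linear order `θ_γ`: finite sequences of ordinals `< γ`. -/
def ThetaCarrier (γ : Ordinal) : Type _ := {l : List Ordinal // ∀ o ∈ l, o < γ}

/-- The strict order of `θ_γ` on underlying lists: `x < y` iff `y` is a proper initial
segment of `x`, or there is `n < min (length x) (length y)` with `x↾n = y↾n` and
`x(n) < y(n)`. -/
def thetaLt (x y : List Ordinal) : Prop :=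
  (y <+: x ∧ y ≠ x) ∨
    ∃ (n : ℕ) (hx : n < x.length) (hy : n < y.length),
      x.take n = y.take n ∧ x.get ⟨n, hx⟩ < y.get ⟨n, hy⟩

/-- The strict order of `θ_γ`. -/
def thetaRel (γ : Ordinal) : ThetaCarrier γ → ThetaCarrier γ → Prop :=
  fun a b => thetaLt a.1 b.1

/-- The product `ρ × θ` of linear orders, ordered by last differences:
`(x, y) < (x', y')` iff `y < y'`, or `y = y'` and `x < x'`. -/
def lastDiffRel {A B : Type*} (r : A → A → Prop) (s : B → B → Prop) :
    A × B → A × B → Prop :=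
  fun p q => s p.2 q.2 ∨ (p.2 = q.2 ∧ r p.1 q.1)

/-!
Call `p : θ_γ → [0, β]` a fibration by copies if it is monotone and each of its fibres is a
copy of `θ_γ`; such a `p` yields `θ_γ ≅ θ_γ × (β + 1)` at once. One is built for every `β` with
`|β| ≤ |γ|`, by induction. Cut `[0, β)` into consecutive closed intervals along a fundamental
sequence of length `λ = cf β`; as `λ ≤ |γ|` and `γ` is not a cardinal, `λ < γ`. A list `i :: s`
with `i < λ` goes to the `i`-th interval, through a translated fibration of `s` which exists by
induction because that interval is shorter than `β`. All other lists go to `β`: they are the empty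
list and the lists with first entry `≥ λ`, and adding `λ` to the first entry maps `θ_γ` onto them
because `γ` is closed under addition.
-/

open Set

theorem not_thetaLt_nil (y : List Ordinal) : ¬ thetaLt [] y := by
  rintro (⟨h, hne⟩ | ⟨n, hx, -⟩)
  · exact hne (List.prefix_nil.mp h)
  · exact absurd hx (Nat.not_lt_zero n)

theorem thetaLt_nil {x : List Ordinal} (h : x ≠ []) : thetaLt x [] :=
  Or.inl ⟨List.nil_prefix, h.symm⟩

theorem thetaLt_cons_cons {a b : Ordinal} {s t : List Ordinal} :
    thetaLt (a :: s) (b :: t) ↔ a < b ∨ a = b ∧ thetaLt s t := by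
  constructor
  · rintro (⟨hp, hne⟩ | ⟨n, hx, hy, htake, hget⟩)
    · obtain ⟨rfl, hts⟩ := List.cons_prefix_cons.mp hp
      exact Or.inr ⟨rfl, Or.inl ⟨hts, fun h => hne (h ▸ rfl)⟩⟩
    · cases n with
      | zero => exact Or.inl (by simpa using hget)
      | succ k =>
        rw [List.take_succ_cons, List.take_succ_cons] at htake
        obtain ⟨rfl, htake'⟩ := List.cons_eq_cons.mp htake
        exact Or.inr ⟨rfl, Or.inr ⟨k, by simpa using hx, by simpa using hy, htake',
          by simpa using hget⟩⟩
  · rintro (hab | ⟨rfl, ⟨hp, hne⟩ | ⟨n, hx, hy, htake, hget⟩⟩)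
    · exact Or.inr ⟨0, by simp, by simp, rfl, hab⟩
    · exact Or.inl ⟨List.cons_prefix_cons.mpr ⟨rfl, hp⟩, by simpa using hne⟩
    · exact Or.inr ⟨n + 1, by simpa using hx, by simpa using hy, by simpa using htake,
        by simpa using hget⟩

theorem thetaLt_cons_cons_self {a : Ordinal} {s t : List Ordinal} :
    thetaLt (a :: s) (a :: t) ↔ thetaLt s t := by
  simp [thetaLt_cons_cons]

theorem thetaLt_irrefl (x : List Ordinal) : ¬ thetaLt x x := by
  induction x with
  | nil => exact not_thetaLt_nil []
  | cons a s ih => rwa [thetaLt_cons_cons_self]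

theorem thetaLt_trans {x y z : List Ordinal} (hxy : thetaLt x y) (hyz : thetaLt y z) :
    thetaLt x z := by
  induction x generalizing y z with
  | nil => exact absurd hxy (not_thetaLt_nil y)
  | cons a s ih =>
    obtain _ | ⟨b, t⟩ := y
    · exact absurd hyz (not_thetaLt_nil z)
    obtain _ | ⟨c, u⟩ := z
    · exact thetaLt_nil (List.cons_ne_nil a s)
    rw [thetaLt_cons_cons] at hxy hyz ⊢
    rcases hxy with hab | ⟨rfl, hst⟩ <;> rcases hyz with hbc | ⟨rfl, htu⟩
    · exact Or.inl (hab.trans hbc)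
    · exact Or.inl hab
    · exact Or.inl hbc
    · exact Or.inr ⟨rfl, ih hst htu⟩

theorem thetaLt_trichotomous (x y : List Ordinal) : thetaLt x y ∨ x = y ∨ thetaLt y x := by
  induction x generalizing y with
  | nil =>
    obtain _ | ⟨b, t⟩ := y
    · exact Or.inr (Or.inl rfl)
    · exact Or.inr (Or.inr (thetaLt_nil (List.cons_ne_nil b t)))
  | cons a s ih =>
    obtain _ | ⟨b, t⟩ := y
    · exact Or.inl (thetaLt_nil (List.cons_ne_nil a s))
    simp only [thetaLt_cons_cons, List.cons.injEq]
    rcases lt_trichotomy a b with hab | rfl | hba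
    · exact Or.inl (Or.inl hab)
    · rcases ih t with h | h | h <;> simp [h]
    · exact Or.inr (Or.inr (Or.inl hba))

theorem thetaLt_modifyHead_add (c : Ordinal) {x y : List Ordinal} :
    thetaLt (x.modifyHead (c + ·)) (y.modifyHead (c + ·)) ↔ thetaLt x y := by
  obtain _ | ⟨a, s⟩ := x <;> obtain _ | ⟨b, t⟩ := y
  · rfl
  · exact iff_of_false (not_thetaLt_nil _) (not_thetaLt_nil _)
  · exact iff_of_true (thetaLt_nil (List.cons_ne_nil _ _)) (thetaLt_nil (List.cons_ne_nil _ _))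
  · simp [thetaLt_cons_cons]

instance (γ : Ordinal) : IsStrictTotalOrder (ThetaCarrier γ) (thetaRel γ) where
  trichotomous x y hxy hyx :=
    Subtype.ext ((thetaLt_trichotomous x.1 y.1).resolve_left hxy |>.resolve_right hyx)
  irrefl x := thetaLt_irrefl x.1
  trans _ _ _ := thetaLt_trans

namespace ThetaCarrier

variable {γ : Ordinal}

def cons (i : Ordinal) (hi : i < γ) (x : ThetaCarrier γ) : ThetaCarrier γ :=
  ⟨i :: x.1, List.forall_mem_cons.mpr ⟨hi, x.2⟩⟩

def tail (x : ThetaCarrier γ) : ThetaCarrier γ :=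
  ⟨x.1.tail, fun o ho => x.2 o (List.mem_of_mem_tail ho)⟩

def addHead (hγ : ∀ δ < γ, ∀ δ' < γ, δ + δ' < γ) (c : Ordinal) (hc : c < γ)
    (x : ThetaCarrier γ) : ThetaCarrier γ :=
  ⟨x.1.modifyHead (c + ·), by
    obtain ⟨_ | ⟨a, s⟩, hx⟩ := x
    · simp
    · exact List.forall_mem_cons.mpr
        ⟨hγ c hc a (hx a List.mem_cons_self), fun o ho => hx o (List.mem_cons_of_mem a ho)⟩⟩

def consEmbedding (i : Ordinal) (hi : i < γ) : thetaRel γ ↪r thetaRel γ :=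
  .ofMonotone (cons i hi) fun _ _ => thetaLt_cons_cons_self.mpr

def addHeadEmbedding (hγ : ∀ δ < γ, ∀ δ' < γ, δ + δ' < γ) (c : Ordinal) (hc : c < γ) :
    thetaRel γ ↪r thetaRel γ :=
  .ofMonotone (addHead hγ c hc) fun _ _ => (thetaLt_modifyHead_add c).mpr

end ThetaCarrier

instance {A B : Type*} (r : A → A → Prop) (s : B → B → Prop) [Std.Trichotomous r]
    [Std.Trichotomous s] : Std.Trichotomous (lastDiffRel r s) where
  trichotomous p q hpq hqp := by
    have h2 : p.2 = q.2 := Std.Trichotomous.trichotomous _ _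
      (fun h => hpq (Or.inl h)) (fun h => hqp (Or.inl h))
    have h1 : p.1 = q.1 := Std.Trichotomous.trichotomous _ _
      (fun h => hpq (Or.inr ⟨h2, h⟩)) (fun h => hqp (Or.inr ⟨h2.symm, h⟩))
    exact Prod.ext h1 h2

structure IsFibrationByCopies {X I : Type*} [Preorder I] (r : X → X → Prop) (S : Set I)
    (p : X → I) : Prop where
  mapsTo : ∀ x, p x ∈ S
  monotone : ∀ x y, r x y → p x ≤ p y
  exists_embedding : ∀ a ∈ S, ∃ g : r ↪r r, range g = p ⁻¹' {a}

namespace IsFibrationByCopies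

variable {X I J : Type*} {r : X → X → Prop} {S : Set I} {p : X → I}

theorem image [LinearOrder I] [Preorder J] {f : I → J} (hf : StrictMono f)
    (h : IsFibrationByCopies r S p) : IsFibrationByCopies r (f '' S) (f ∘ p) where
  mapsTo x := mem_image_of_mem f (h.mapsTo x)
  monotone x y hxy := hf.monotone (h.monotone x y hxy)
  exists_embedding := by
    rintro _ ⟨a, ha, rfl⟩
    obtain ⟨g, hg⟩ := h.exists_embedding a ha
    refine ⟨g, hg.trans ?_⟩
    ext x
    simp [hf.injective.eq_iff]

theorem nonempty_relIso_lastDiffRel [IsStrictTotalOrder X r] [LinearOrder I]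
    (h : IsFibrationByCopies r S p) : Nonempty (r ≃r lastDiffRel r ((· < ·) : S → S → Prop)) := by
  choose g hg using fun a : S => h.exists_embedding a a.2
  have hpg (a : S) (x : X) : p (g a x) = a := by
    simpa [hg] using mem_range_self (f := g a) x
  have cross (a b : S) (x y : X) (hab : a < b) : r (g a x) (g b y) := by
    rcases trichotomous_of r (g a x) (g b y) with hr | he | hr
    · exact hr
    · exact absurd (Subtype.ext (by rw [← hpg a x, ← hpg b y, he])) hab.ne
    · exact absurd (by simpa only [hpg] using h.monotone _ _ hr : (b : I) ≤ a) (not_le.mpr hab)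
  let F : lastDiffRel r ((· < ·) : S → S → Prop) ↪r r := .ofMonotone (fun z => g z.2 z.1) <| by
    rintro ⟨x, a⟩ ⟨y, b⟩ (hab | ⟨rfl, hxy⟩)
    · exact cross a b x y hab
    · exact (g a).map_rel_iff.mpr hxy
  refine ⟨(RelIso.ofSurjective F fun x => ?_).symm⟩
  obtain ⟨y, hy⟩ : x ∈ range (g ⟨p x, h.mapsTo x⟩) := by rw [hg]; rfl
  exact ⟨(y, _), hy⟩

end IsFibrationByCopies

namespace ThetaCarrier

variable {γ lam t : Ordinal}

noncomputable def glueByHead (lam t : Ordinal) (p : Iio lam → ThetaCarrier γ → Ordinal)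
    (x : ThetaCarrier γ) : Ordinal :=
  match x.1 with
  | i :: _ => if hi : i < lam then p ⟨i, hi⟩ x.tail else t
  | [] => t

variable {p : Iio lam → ThetaCarrier γ → Ordinal}

theorem glueByHead_cons_of_lt {i : Ordinal} {s : List Ordinal} (hx : ∀ o ∈ i :: s, o < γ)
    (hi : i < lam) : glueByHead lam t p ⟨i :: s, hx⟩ = p ⟨i, hi⟩ (tail ⟨i :: s, hx⟩) :=
  dif_pos hi

theorem glueByHead_cons_of_not_lt {i : Ordinal} {s : List Ordinal} (hx : ∀ o ∈ i :: s, o < γ)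
    (hi : ¬ i < lam) : glueByHead lam t p ⟨i :: s, hx⟩ = t :=
  dif_neg hi

theorem glueByHead_cons (hlam : lam ≤ γ) (i : Iio lam) (y : ThetaCarrier γ) :
    glueByHead lam t p (cons i (i.2.trans_le hlam) y) = p i y :=
  dif_pos i.2

variable {S : Iio lam → Set Ordinal}

theorem glueByHead_le (hp : ∀ i, IsFibrationByCopies (thetaRel γ) (S i) (p i))
    (ht : ∀ i, ∀ a ∈ S i, a < t) (x : ThetaCarrier γ) : glueByHead lam t p x ≤ t := by
  obtain ⟨_ | ⟨i, s⟩, hx⟩ := x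
  · exact le_rfl
  by_cases hi : i < lam
  · rw [glueByHead_cons_of_lt hx hi]
    exact (ht _ _ ((hp _).mapsTo _)).le
  · rw [glueByHead_cons_of_not_lt hx hi]

theorem glueByHead_monotone (hp : ∀ i, IsFibrationByCopies (thetaRel γ) (S i) (p i))
    (hS : ∀ i j, i < j → ∀ a ∈ S i, ∀ b ∈ S j, a < b) (ht : ∀ i, ∀ a ∈ S i, a < t)
    (x y : ThetaCarrier γ) (hxy : thetaRel γ x y) :
    glueByHead lam t p x ≤ glueByHead lam t p y := by
  obtain ⟨lx, hx⟩ := x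
  obtain ⟨_ | ⟨j, u⟩, hy⟩ := y
  · exact glueByHead_le hp ht _
  by_cases hj : j < lam
  swap
  · rw [glueByHead_cons_of_not_lt hy hj]
    exact glueByHead_le hp ht _
  obtain _ | ⟨i, s⟩ := lx
  · exact absurd hxy (not_thetaLt_nil _)
  rcases thetaLt_cons_cons.mp hxy with hij | ⟨rfl, hsu⟩
  · rw [glueByHead_cons_of_lt hx (hij.trans hj), glueByHead_cons_of_lt hy hj]
    exact (hS ⟨i, _⟩ ⟨j, hj⟩ hij _ ((hp _).mapsTo _) _ ((hp _).mapsTo _)).le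
  · rw [glueByHead_cons_of_lt hx hj, glueByHead_cons_of_lt hy hj]
    exact (hp _).monotone _ _ hsu

theorem preimage_glueByHead_top (hγ : ∀ δ < γ, ∀ δ' < γ, δ + δ' < γ) (hlam : lam < γ)
    (hp : ∀ i, IsFibrationByCopies (thetaRel γ) (S i) (p i)) (ht : ∀ i, ∀ a ∈ S i, a < t) :
    glueByHead lam t p ⁻¹' {t} = range (addHead hγ lam hlam) := by
  ext ⟨_ | ⟨i, s⟩, hx⟩
  · exact iff_of_true rfl ⟨⟨[], hx⟩, rfl⟩
  by_cases hi : i < lam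
  · refine iff_of_false ?_ ?_
    · show glueByHead lam t p ⟨i :: s, hx⟩ ≠ t
      rw [glueByHead_cons_of_lt hx hi]
      exact (ht _ _ ((hp _).mapsTo _)).ne
    · rintro ⟨⟨_ | ⟨j, u⟩, hy⟩, h⟩ <;> have h' := congrArg Subtype.val h
      · simp [addHead] at h'
      · simp only [addHead, List.modifyHead_cons, List.cons.injEq] at h'
        exact hi.not_ge (h'.1 ▸ le_self_add)
  · refine iff_of_true (glueByHead_cons_of_not_lt hx hi) ⟨⟨(i - lam) :: s, ?_⟩, ?_⟩
    · exact List.forall_mem_cons.mpr ⟨(Ordinal.sub_le_self i lam).trans_lt (hx i (by simp)),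
        fun o ho => hx o (List.mem_cons_of_mem i ho)⟩
    · exact Subtype.ext (by simp [addHead, Ordinal.add_sub_cancel_of_le (not_lt.mp hi)])

theorem preimage_glueByHead_of_mem (hlam : lam < γ)
    (hp : ∀ i, IsFibrationByCopies (thetaRel γ) (S i) (p i))
    (hS : ∀ i j, i < j → ∀ a ∈ S i, ∀ b ∈ S j, a < b) (ht : ∀ i, ∀ a ∈ S i, a < t)
    {k : Iio lam} {a : Ordinal} (ha : a ∈ S k) :
    glueByHead lam t p ⁻¹' {a} = cons k (k.2.trans hlam) '' (p k ⁻¹' {a}) := by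
  ext x
  refine ⟨fun hxa => ?_, ?_⟩
  · obtain ⟨_ | ⟨i, s⟩, hx⟩ := x
    · exact absurd hxa (ht k a ha).ne'
    by_cases hi : i < lam
    · have hxa' : p ⟨i, hi⟩ (tail ⟨i :: s, hx⟩) = a := (glueByHead_cons_of_lt hx hi).symm.trans hxa
      obtain rfl : ⟨i, hi⟩ = k := by
        by_contra hne
        rcases lt_or_gt_of_ne hne with hlt | hlt
        · exact (hS _ _ hlt _ (hxa' ▸ (hp _).mapsTo _) _ ha).false
        · exact (hS _ _ hlt _ ha _ (hxa' ▸ (hp _).mapsTo _)).false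
      exact ⟨_, hxa', rfl⟩
    · exact absurd ((glueByHead_cons_of_not_lt hx hi).symm.trans hxa) (ht k a ha).ne'
  · rintro ⟨y, hy, rfl⟩
    exact (glueByHead_cons hlam.le k y).trans hy

theorem isFibrationByCopies_glueByHead (hγ : ∀ δ < γ, ∀ δ' < γ, δ + δ' < γ) (hlam : lam < γ)
    (hp : ∀ i, IsFibrationByCopies (thetaRel γ) (S i) (p i))
    (hS : ∀ i j, i < j → ∀ a ∈ S i, ∀ b ∈ S j, a < b) (ht : ∀ i, ∀ a ∈ S i, a < t) :
    IsFibrationByCopies (thetaRel γ) (insert t (⋃ i, S i)) (glueByHead lam t p) where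
  mapsTo := by
    rintro ⟨_ | ⟨i, s⟩, hx⟩
    · exact mem_insert t _
    by_cases hi : i < lam
    · rw [glueByHead_cons_of_lt hx hi]
      exact mem_insert_of_mem _ (mem_iUnion_of_mem _ ((hp _).mapsTo _))
    · rw [glueByHead_cons_of_not_lt hx hi]
      exact mem_insert t _
  monotone := glueByHead_monotone hp hS ht
  exists_embedding := by
    rintro a (rfl | ha)
    · exact ⟨addHeadEmbedding hγ lam hlam, (preimage_glueByHead_top hγ hlam hp ht).symm⟩
    · obtain ⟨k, hk⟩ := mem_iUnion.mp ha
      obtain ⟨g, hg⟩ := (hp k).exists_embedding a hk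
      refine ⟨g.trans (consEmbedding k (k.2.trans hlam)), ?_⟩
      rw [preimage_glueByHead_of_mem hlam hp hS ht hk, ← hg, RelEmbedding.coe_trans, range_comp]
      rfl

end ThetaCarrier

theorem Ordinal.image_add_Iic_sub {c d : Ordinal} (h : c ≤ d) :
    (c + ·) '' Iic (d - c) = Icc c d := by
  ext a
  constructor
  · rintro ⟨x, hx, rfl⟩
    exact ⟨le_self_add, ((add_le_add_iff_left c).mpr hx).trans_eq (Ordinal.add_sub_cancel_of_le h)⟩
  · rintro ⟨hca, had⟩
    refine ⟨a - c, ?_, Ordinal.add_sub_cancel_of_le hca⟩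
    rw [mem_Iic, Ordinal.sub_le, Ordinal.add_sub_cancel_of_le h]
    exact had

section StepInterval

variable {ι : Type*} [LinearOrder ι] (f : ι → Ordinal)

def stepInterval (i : ι) : Set Ordinal := {a | (∀ j < i, f j < a) ∧ a ≤ f i}

variable {f}

theorem stepInterval_lt {i j : ι} (hij : i < j) {a b : Ordinal} (ha : a ∈ stepInterval f i)
    (hb : b ∈ stepInterval f j) : a < b :=
  ha.2.trans_lt (hb.1 i hij)

theorem self_mem_stepInterval (hf : StrictMono f) (i : ι) : f i ∈ stepInterval f i :=
  ⟨fun _ hj => hf hj, le_rfl⟩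

theorem stepInterval_eq_Icc (hf : StrictMono f) (i : ι) :
    stepInterval f i = Icc (sInf (stepInterval f i)) (f i) := by
  have hne : (stepInterval f i).Nonempty := ⟨f i, self_mem_stepInterval hf i⟩
  ext a
  refine ⟨fun ha => ⟨csInf_le' ha, ha.2⟩, fun ha => ⟨fun j hj => ?_, ha.2⟩⟩
  exact ((csInf_mem hne).1 j hj).trans_le ha.1

theorem iUnion_stepInterval [WellFoundedLT ι] {β : Ordinal} (hlt : ∀ i, f i < β)
    (hcof : ∀ a < β, ∃ i, a ≤ f i) : ⋃ i, stepInterval f i = Iio β := by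
  ext a
  simp only [mem_iUnion, mem_Iio]
  refine ⟨fun ⟨i, ha⟩ => ha.2.trans_lt (hlt i), fun ha => ?_⟩
  obtain ⟨i, hi, hmin⟩ := wellFounded_lt.has_min {i | a ≤ f i} (hcof a ha)
  exact ⟨i, fun j hj => not_le.mp fun h => hmin j h hj, hi⟩

end StepInterval

theorem exists_isFibrationByCopies_thetaRel_Iic {γ : Ordinal}
    (hγ : ∀ δ < γ, ∀ δ' < γ, δ + δ' < γ) (hcard : γ.card.ord < γ) (β : Ordinal)
    (hβ : β.card ≤ γ.card) : ∃ p, IsFibrationByCopies (thetaRel γ) (Iic β) p := by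
  induction β using WellFoundedLT.induction with | _ β IH =>
  obtain ⟨f, hf⟩ := Ordinal.exists_isFundamentalSeq (o := β) rfl
  let d : Iio β.cof.ord → Ordinal := fun i => f i
  have hd : StrictMono d := (Subtype.strictMono_coe _).comp hf.strictMono
  have hlam : β.cof.ord < γ :=
    (Cardinal.ord_le_ord.2 ((Ordinal.cof_le_card β).trans hβ)).trans_lt hcard
  have hpiece (i) : ∃ p, IsFibrationByCopies (thetaRel γ) (stepInterval d i) p := by
    have hc : sInf (stepInterval d i) ≤ d i := csInf_le' (self_mem_stepInterval hd i)
    have hδ : d i - sInf (stepInterval d i) < β := (Ordinal.sub_le_self _ _).trans_lt (f i).2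
    obtain ⟨p, hp⟩ := IH _ hδ ((Ordinal.card_le_card hδ.le).trans hβ)
    rw [stepInterval_eq_Icc hd, ← Ordinal.image_add_Iic_sub hc]
    exact ⟨_, hp.image add_right_strictMono⟩
  choose p hp using hpiece
  have hcof : ∀ a < β, ∃ i, a ≤ d i := fun a ha => by
    obtain ⟨_, ⟨i, rfl⟩, hi⟩ := hf.isCofinal_range ⟨a, ha⟩
    exact ⟨i, hi⟩
  rw [← Iio_insert, ← iUnion_stepInterval (fun i => (f i).2) hcof]
  exact ⟨_, ThetaCarrier.isFibrationByCopies_glueByHead hγ hlam hp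
    (fun _ _ hij _ ha _ hb => stepInterval_lt hij ha hb) (fun i _ ha => ha.2.trans_lt (f i).2)⟩

/-- Corollary 2.11: if `γ` is closed under ordinal addition and is not a cardinal,
and `α < |γ|⁺` is a successor ordinal, then `θ_γ` is order isomorphic to `θ_γ × α`. -/
theorem theta_iso_theta_mul_succOrdinal (γ : Ordinal)
    (hγ : ∀ δ < γ, ∀ δ' < γ, δ + δ' < γ)
    (hγcard : γ.card.ord ≠ γ)
    (α : Ordinal) (hα : α < (Order.succ γ.card).ord)
    (hαsucc : ∃ β : Ordinal, α = β + 1) :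
    Nonempty
      (thetaRel γ ≃r
        lastDiffRel (thetaRel γ)
          (fun a b : {o : Ordinal // o < α} => a.1 < b.1)) := by
  obtain ⟨β, rfl⟩ := hαsucc
  have hβ : β.card ≤ γ.card :=
    Order.lt_succ_iff.mp (Cardinal.lt_ord.mp ((lt_add_one β).trans hα))
  obtain ⟨p, hp⟩ := exists_isFibrationByCopies_thetaRel_Iic hγ
    ((Cardinal.ord_card_le γ).lt_of_ne hγcard) β hβ
  rw [← Order.Iio_succ, Order.succ_eq_add_one] at hp
  exact hp.nonempty_relIso_lastDiffRel
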